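/- Let H be a bipartite graph with parts A and B₁ ∪ B₂, |A| = 3m, |B₁| = |B₂| = 2m, such that for every subset B' ⊆ B₁ of size m, the graph H − B' has a perfect matching. Let H' be a vertex-disjoint isomorphic copy of H with parts A' and B₁' ∪ B₂', and let H'' be any bipartite graph between B₁∪B₂ and B₁'∪B₂' such that H''[B₁ ∪ B₁'] contains a perfect matching between B₁ and B₁'. Then for every pair of sets X ⊆ B₁ and Y ⊆ B₁' with |X| = |Y| ≤ m, the graph H ∪ H' ∪ H'' − (X ∪ Y) has a perfect matching. -/

import Mathlib

/-!
Let `f` be the `H''`-matching of `B₁` onto `B₁'` and `k = |X| = |Y|`. Since `X ∪ (B₁ \ f⁻¹(Y))` has at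
least `2m - k ≥ m` elements, `X` extends by some `S ⊆ B₁ \ f⁻¹(Y)` to an `m`-subset of `B₁`, and then
`Y ∪ f(S)` is an `m`-subset of `B₁'`. Robustness of `H`, transported along `e` for the second one,
gives perfect matchings of `H - (X ∪ S)` and `H' - (Y ∪ f(S))`; the edges `x f(x)`, `x ∈ S`, of `H''`
match the remaining vertices.
-/

/-- `G` restricted to the vertex set `s` has a perfect matching. -/
def HasPMOn {V : Type*} (G : SimpleGraph V) (s : Set V) : Prop :=
  ∃ M : SimpleGraph.Subgraph (G.induce s), M.IsPerfectMatching

theorem Set.BijOn.ncard_inter_preimage {α β : Type*} {f : α → β} {s : Set α} {t Y : Set β}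
    (hf : BijOn f s t) (hY : Y ⊆ t) : (s ∩ f ⁻¹' Y).ncard = Y.ncard := by
  rw [← (hf.injOn.mono inter_subset_left).ncard_image, image_inter_preimage,
    hf.image_eq, inter_eq_self_of_subset_right hY]

theorem Set.BijOn.exists_extend_ncard_eq {α β : Type*} [Finite α] {f : α → β} {s X : Set α}
    {t Y : Set β} {m : ℕ} (hf : BijOn f s t) (hY : Y ⊆ t)
    (hXY : X.ncard = Y.ncard) (hXm : X.ncard ≤ m) (hm : m + X.ncard ≤ s.ncard) :
    ∃ S ⊆ s \ X, f '' S ⊆ t \ Y ∧ (X ∪ S).ncard = m ∧ (Y ∪ f '' S).ncard = m := by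
  have hm' : m ≤ (X ∪ (s \ f ⁻¹' Y)).ncard := by
    have := le_ncard_sdiff (s ∩ f ⁻¹' Y) s
    rw [sdiff_self_inter, hf.ncard_inter_preimage hY, ← hXY] at this
    exact (by omega : m ≤ s.ncard - X.ncard).trans (this.trans (ncard_le_ncard subset_union_right))
  obtain ⟨T, hXT, hTs, hTm⟩ := exists_subsuperset_card_eq subset_union_left hXm hm'
  have hTX : T \ X ⊆ s \ f ⁻¹' Y := fun x ⟨hxT, hxX⟩ => (hTs hxT).resolve_left hxX
  have hinj : (T \ X).InjOn f := hf.injOn.mono fun x hx => (hTX hx).1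
  have ht : t.Finite := hf.image_eq ▸ s.toFinite.image f
  refine ⟨T \ X, fun x hx => ⟨(hTX hx).1, hx.2⟩, ?_, by rwa [union_sdiff_cancel hXT], ?_⟩
  · rintro _ ⟨x, hx, rfl⟩
    exact ⟨hf.mapsTo (hTX hx).1, (hTX hx).2⟩
  · have hdisj : Disjoint Y (f '' (T \ X)) := by
      rw [disjoint_right]
      rintro _ ⟨x, hx, rfl⟩
      exact (hTX hx).2
    rw [ncard_union_eq hdisj (ht.subset hY) (toFinite _ |>.image f), hinj.ncard_image,
      ncard_sdiff hXT, hTm]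
    omega

section HasPMOn

open SimpleGraph

variable {V W : Type*} {G G' : SimpleGraph V} {s t : Set V}

theorem hasPMOn_iff_exists_isMatching :
    HasPMOn G s ↔ ∃ M : G.Subgraph, M.verts = s ∧ M.IsMatching := by
  constructor
  · rintro ⟨M, hM, hspan⟩
    refine ⟨M.map (Embedding.induce s).toHom, ?_, hM.map _ Subtype.val_injective⟩
    rw [Subgraph.map_verts, hspan.verts_eq_univ, Set.image_univ]
    exact Subtype.range_coe
  · rintro ⟨M, rfl, hM⟩
    refine ⟨M.comap (Embedding.induce M.verts).toHom, fun v _ => ?_, fun v => v.2⟩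
    obtain ⟨w, hvw, huniq⟩ := hM v.2
    exact ⟨⟨w, M.edge_vert hvw.symm⟩, ⟨hvw.adj_sub, hvw⟩, fun u hu => Subtype.ext (huniq u hu.2)⟩

theorem HasPMOn.mono (h : G ≤ G') (hs : HasPMOn G s) : HasPMOn G' s := by
  obtain ⟨M, rfl, hM⟩ := hasPMOn_iff_exists_isMatching.1 hs
  exact hasPMOn_iff_exists_isMatching.2 ⟨M.map (Hom.ofLE h), by simp, hM.map_ofLE h⟩

theorem HasPMOn.union (hs : HasPMOn G s) (ht : HasPMOn G t) (hst : Disjoint s t) :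
    HasPMOn G (s ∪ t) := by
  obtain ⟨M, rfl, hM⟩ := hasPMOn_iff_exists_isMatching.1 hs
  obtain ⟨N, rfl, hN⟩ := hasPMOn_iff_exists_isMatching.1 ht
  exact hasPMOn_iff_exists_isMatching.2 ⟨M ⊔ N, rfl,
    hM.sup hN (by rwa [hM.support_eq_verts, hN.support_eq_verts])⟩

theorem HasPMOn.image {H : SimpleGraph W} (e : G ≃g H) (hs : HasPMOn G s) :
    HasPMOn H (e '' s) := by
  obtain ⟨M, rfl, hM⟩ := hasPMOn_iff_exists_isMatching.1 hs
  exact hasPMOn_iff_exists_isMatching.2 ⟨M.map e.toHom, rfl, hM.map _ e.injective⟩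

theorem hasPMOn_union_image {f : V → V} (hf : s.InjOn f) (hs : Disjoint s (f '' s))
    (hadj : ∀ x ∈ s, G.Adj x (f x)) : HasPMOn G (s ∪ f '' s) :=
  hasPMOn_iff_exists_isMatching.2 <| Subgraph.IsMatching.exists_of_disjoint_sets_of_equiv hs
    (hf.bijOn_image.equiv f) fun v => hadj v v.2

theorem HasPMOn.glue {U U' X Y S T : Set V} (hUU' : Disjoint U U') (hX : X ⊆ U) (hY : Y ⊆ U')
    (hS : S ⊆ U \ X) (hT : T ⊆ U' \ Y) (h₁ : HasPMOn G (U \ (X ∪ S)))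
    (h₂ : HasPMOn G (U' \ (Y ∪ T))) (h₃ : HasPMOn G (S ∪ T)) :
    HasPMOn G ((U ∪ U') \ (X ∪ Y)) := by
  have hmem : ∀ v, (v ∈ U → v ∉ U') ∧ (v ∈ X → v ∈ U) ∧ (v ∈ Y → v ∈ U') ∧
      (v ∈ S → v ∈ U \ X) ∧ (v ∈ T → v ∈ U' \ Y) :=
    fun v => ⟨fun h => hUU'.notMem_of_mem_left h, @hX v, @hY v, @hS v, @hT v⟩
  have hsplit : (U ∪ U') \ (X ∪ Y) = U \ (X ∪ S) ∪ U' \ (Y ∪ T) ∪ (S ∪ T) := by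
    ext v
    have := hmem v
    simp only [Set.mem_sdiff, Set.mem_union] at *
    tauto
  rw [hsplit]
  refine (h₁.union h₂ ?_).union h₃ ?_ <;> rw [Set.disjoint_left] <;> intro v <;>
    have := hmem v <;> simp only [Set.mem_sdiff, Set.mem_union] at * <;> tauto

end HasPMOn

open Set in
theorem stmt7_general {V : Type*} [Fintype V] (m : ℕ)
    (A B1 B2 A' B1' B2' : Set V)
    (hdisj : List.Pairwise Disjoint [A, B1, B2, A', B1', B2'])
    (hB1 : B1.ncard = 2 * m)
    (H H' H'' : SimpleGraph V)
    (hHrob : ∀ B' ⊆ B1, B'.ncard = m → HasPMOn H ((A ∪ B1 ∪ B2) \ B'))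
    (e : V ≃ V) (hA' : A' = e '' A) (hB1' : B1' = e '' B1) (hB2' : B2' = e '' B2)
    (hH' : ∀ x y, H'.Adj (e x) (e y) ↔ H.Adj x y)
    (hH''pm : ∃ f : V → V, Set.BijOn f B1 B1' ∧ ∀ x ∈ B1, H''.Adj x (f x))
    (X Y : Set V) (hX : X ⊆ B1) (hY : Y ⊆ B1')
    (hXY : X.ncard = Y.ncard) (hXm : X.ncard ≤ m) :
    HasPMOn (H ⊔ H' ⊔ H'') ((A ∪ B1 ∪ B2 ∪ A' ∪ B1' ∪ B2') \ (X ∪ Y)) := by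
  obtain ⟨f, hf, hfadj⟩ := hH''pm
  obtain ⟨S, hS, hfS, hXS, hYS⟩ := hf.exists_extend_ncard_eq hY hXY hXm (by omega)
  have hUU' : Disjoint (A ∪ B1 ∪ B2) (A' ∪ B1' ∪ B2') := by
    simp only [List.pairwise_cons, List.mem_cons, List.not_mem_nil, forall_eq_or_imp,
      List.Pairwise.nil] at hdisj
    simp only [disjoint_union_left, disjoint_union_right]
    tauto
  have hU' : A' ∪ B1' ∪ B2' = e '' (A ∪ B1 ∪ B2) := by simp only [hA', hB1', hB2', image_union]
  have hB1U : B1 ⊆ A ∪ B1 ∪ B2 := subset_union_right.trans subset_union_left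
  have hB1U' : B1' ⊆ A' ∪ B1' ∪ B2' := subset_union_right.trans subset_union_left
  have h₁ : HasPMOn H ((A ∪ B1 ∪ B2) \ (X ∪ S)) :=
    hHrob _ (union_subset hX (hS.trans sdiff_subset)) hXS
  have h₂ : HasPMOn H' ((A' ∪ B1' ∪ B2') \ (Y ∪ f '' S)) := by
    have hsub : e.symm '' (Y ∪ f '' S) ⊆ B1 := by
      rw [← e.symm_image_image B1, ← hB1']
      exact image_mono (union_subset hY (hfS.trans sdiff_subset))
    have := (hHrob _ hsub (by rw [e.symm.injective.injOn.ncard_image, hYS])).image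
      ⟨e, hH' _ _⟩
    rwa [RelIso.coe_fn_mk, image_sdiff e.injective, e.image_symm_image, ← hU'] at this
  have h₃ : HasPMOn H'' (S ∪ f '' S) :=
    hasPMOn_union_image (hf.injOn.mono (hS.trans sdiff_subset))
      (hUU'.mono (hS.trans (sdiff_subset.trans hB1U)) (hfS.trans (sdiff_subset.trans hB1U')))
      fun x hx => hfadj x (hS hx).1
  rw [show A ∪ B1 ∪ B2 ∪ A' ∪ B1' ∪ B2' = (A ∪ B1 ∪ B2) ∪ (A' ∪ B1' ∪ B2') by
    simp only [union_assoc]]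
  exact HasPMOn.glue hUU' (hX.trans hB1U) (hY.trans hB1U')
    (fun x hx => ⟨hB1U (hS hx).1, (hS hx).2⟩) (fun y hy => ⟨hB1U' (hfS hy).1, (hfS hy).2⟩)
    (h₁.mono (le_sup_left.trans le_sup_left)) (h₂.mono (le_sup_right.trans le_sup_left))
    (h₃.mono le_sup_right)

/-- Robustly matchable bipartite graphs glue.  If `H` (on parts `A`,
`B₁ ∪ B₂` with sizes `3m, 2m, 2m`) remains perfectly matchable after deleting any
`m`-subset of `B₁`, `H'` is a vertex-disjoint isomorphic copy (via `e`), and `H''` is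
a bipartite graph between `B₁ ∪ B₂` and `B₁' ∪ B₂'` containing a perfect matching
between `B₁` and `B₁'`, then for all `X ⊆ B₁`, `Y ⊆ B₁'` with `|X| = |Y| ≤ m`,
`H ∪ H' ∪ H'' − (X ∪ Y)` has a perfect matching. -/
theorem stmt7 {V : Type*} [Fintype V] (m : ℕ)
    (A B1 B2 A' B1' B2' : Set V)
    (hdisj : List.Pairwise Disjoint [A, B1, B2, A', B1', B2'])
    (hA : A.ncard = 3 * m) (hB1 : B1.ncard = 2 * m) (hB2 : B2.ncard = 2 * m)
    (H H' H'' : SimpleGraph V)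
    (hHbip : ∀ x y, H.Adj x y → (x ∈ A ∧ y ∈ B1 ∪ B2) ∨ (y ∈ A ∧ x ∈ B1 ∪ B2))
    (hHrob : ∀ B' ⊆ B1, B'.ncard = m → HasPMOn H ((A ∪ B1 ∪ B2) \ B'))
    (e : V ≃ V) (hA' : A' = e '' A) (hB1' : B1' = e '' B1) (hB2' : B2' = e '' B2)
    (hH' : ∀ x y, H'.Adj (e x) (e y) ↔ H.Adj x y)
    (hH''bip : ∀ x y, H''.Adj x y →
      (x ∈ B1 ∪ B2 ∧ y ∈ B1' ∪ B2') ∨ (y ∈ B1 ∪ B2 ∧ x ∈ B1' ∪ B2'))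
    (hH''pm : ∃ f : V → V, Set.BijOn f B1 B1' ∧ ∀ x ∈ B1, H''.Adj x (f x))
    (X Y : Set V) (hX : X ⊆ B1) (hY : Y ⊆ B1')
    (hXY : X.ncard = Y.ncard) (hXm : X.ncard ≤ m) :
    HasPMOn (H ⊔ H' ⊔ H'') ((A ∪ B1 ∪ B2 ∪ A' ∪ B1' ∪ B2') \ (X ∪ Y)) :=
  stmt7_general m A B1 B2 A' B1' B2' hdisj hB1 H H' H'' hHrob e hA' hB1' hB2' hH' hH''pm X Y hX hY
    hXY hXm
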